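/- In the wreathed 2-group W, let D = ⟨ab⁻¹, t⟩. Then D is isomorphic to the dihedral group of order 2^{n+1}, the center of D is ⟨(ab⁻¹)^{2^{n-1}}⟩ of order 2, and the centralizer of D in W equals the diagonal: C_W(D) = Δ = Z(W). -/

import Mathlib

namespace Wreathed

/-- The cyclic group of order `2^n`. -/
abbrev C (n : ℕ) : Type := Multiplicative (ZMod (2^n))

/-- The coordinate-swapping automorphism of `C n × C n`. -/
def swapAut (n : ℕ) : MulAut (C n × C n) := MulEquiv.prodComm

lemma swapAut_mul_self (n : ℕ) : swapAut n * swapAut n = 1 := by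
  ext x <;> rfl

lemma two_cases (x : Multiplicative (ZMod 2)) :
    x = 1 ∨ x = Multiplicative.ofAdd 1 := by
  revert x; decide

/-- The action of `C_2` on `C n × C n` by swapping the two coordinates. -/
def act (n : ℕ) : Multiplicative (ZMod 2) →* MulAut (C n × C n) where
  toFun x := if x = 1 then 1 else swapAut n
  map_one' := if_pos rfl
  map_mul' := by
    have h11 : (Multiplicative.ofAdd 1 : Multiplicative (ZMod 2)) *
        Multiplicative.ofAdd 1 = 1 := by decide
    have h1ne : (Multiplicative.ofAdd 1 : Multiplicative (ZMod 2)) ≠ 1 := by decide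
    intro x y
    rcases two_cases x with hx | hx <;> rcases two_cases y with hy | hy <;>
      subst hx <;> subst hy <;>
      simp [h11, h1ne, swapAut_mul_self]

/-- The wreathed 2-group `W = (C_{2^n} × C_{2^n}) ⋊ C_2`,
i.e. the wreath product `Z_{2^n} ≀ Z_2`. -/
abbrev W (n : ℕ) : Type := (C n × C n) ⋊[act n] (Multiplicative (ZMod 2))

/-- The element `a = ((g,1); 0)`. -/
def a (n : ℕ) : W n := SemidirectProduct.inl (Multiplicative.ofAdd 1, 1)

/-- The element `b = ((1,g); 0)`. -/
def b (n : ℕ) : W n := SemidirectProduct.inl (1, Multiplicative.ofAdd 1)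

/-- The element `t = ((1,1); 1)`. -/
def t (n : ℕ) : W n := SemidirectProduct.inr (Multiplicative.ofAdd 1)

/-- The base subgroup `A = ⟨a, b⟩`. -/
def A (n : ℕ) : Subgroup (W n) := Subgroup.closure {a n, b n}

/-- The diagonal `Δ = ⟨ab⟩`. -/
def diag (n : ℕ) : Subgroup (W n) := Subgroup.zpowers (a n * b n)

/-- The anti-diagonal `Δ⁻ = ⟨ab⁻¹⟩`. -/
def antidiag (n : ℕ) : Subgroup (W n) := Subgroup.zpowers (a n * (b n)⁻¹)

end Wreathed

/-!
The assignment `r i ↦ ((gⁱ, g⁻ⁱ); 0) = (ab⁻¹)ⁱ`, `sr i ↦ ((g⁻ⁱ, gⁱ); 1) = t (ab⁻¹)ⁱ` is an injective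
homomorphism from the dihedral group of order `2^{n+1}` onto `D = ⟨ab⁻¹, t⟩`. An element
`((u, v); e)` of `W` commutes with `t` iff `u = v`, and with `ab⁻¹` iff `e = 0`, since otherwise
`g = g⁻¹`, which fails for `n ≥ 2`. Hence `C_W(D) = Δ`; as `Δ` is visibly central and
`Z(W) ≤ C_W(D)`, also `Δ = Z(W)`. Finally `Z(D) = D ∩ Δ` consists of the rotations `r i` with
`i = -i` in `ℤ/2ⁿ`, that is `i ∈ {0, 2^{n-1}}`.
-/

namespace DihedralGroup

lemma closure_r_one_sr_zero {m : ℕ} :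
    Subgroup.closure {r 1, sr 0} = (⊤ : Subgroup (DihedralGroup m)) := by
  refine eq_top_iff.2 fun d _ => ?_
  have hr : ∀ i : ZMod m, r i ∈ Subgroup.closure {(r 1 : DihedralGroup m), sr 0} := fun i => by
    rw [← ZMod.intCast_zmod_cast i, ← r_one_zpow]
    exact zpow_mem (Subgroup.subset_closure (by simp)) _
  rcases d with i | i
  · exact hr i
  · rw [← zero_add i, ← sr_mul_r]
    exact mul_mem (Subgroup.subset_closure (by simp)) (hr i)

end DihedralGroup

lemma ZMod.neg_eq_self_iff_two_pow {n : ℕ} (hn : n ≠ 0) (i : ZMod (2 ^ n)) :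
    -i = i ↔ i = 0 ∨ i = ((2 ^ (n - 1) : ℕ) : ZMod (2 ^ n)) := by
  have h2n : 2 ^ n = 2 * 2 ^ (n - 1) := by rw [← pow_succ']; congr 1; omega
  have hlt : 2 ^ (n - 1) < 2 ^ n := Nat.pow_lt_pow_right one_lt_two (by omega)
  rw [ZMod.neg_eq_self_iff]
  refine or_congr_right ⟨fun h => ZMod.val_injective _ ?_, fun h => ?_⟩
  · rw [ZMod.val_natCast_of_lt hlt]; omega
  · rw [h, ZMod.val_natCast_of_lt hlt]; omega

namespace Wreathed

open Multiplicative SemidirectProduct DihedralGroup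

variable {n : ℕ}

lemma act_ofAdd_one : act n (ofAdd 1) = swapAut n := by
  simp [act]

lemma act_apply_diag (e : Multiplicative (ZMod 2)) (u : C n) : act n e (u, u) = (u, u) := by
  rcases two_cases e with rfl | rfl
  · simp
  · rw [act_ofAdd_one]; rfl

lemma a_mul_b : a n * b n = inl (ofAdd 1, ofAdd 1) := by
  simp [a, b, ← map_mul]

lemma a_mul_b_inv : a n * (b n)⁻¹ = inl (ofAdd 1, ofAdd (-1)) := by
  simp [a, b, ← map_inv, ← map_mul, ofAdd_neg]

lemma commute_t_iff (x : W n) : Commute (t n) x ↔ x.left.1 = x.left.2 := by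
  rw [Commute, SemiconjBy, SemidirectProduct.ext_iff]
  simp [t, act_ofAdd_one, swapAut, mul_comm x.right, Prod.ext_iff, eq_comm]

lemma commute_a_mul_b_inv_iff (hn : 2 ≤ n) (x : W n) :
    Commute (a n * (b n)⁻¹) x ↔ x.right = 1 := by
  rcases two_cases x.right with h | h
  · rw [Commute, SemiconjBy, SemidirectProduct.ext_iff]
    simp [a_mul_b_inv, h, mul_comm x.left]
  · refine iff_of_false (fun hcomm => ?_) (by simp [h])
    have hneg : (-1 : ZMod (2 ^ n)) = 1 := by
      simpa [a_mul_b_inv, h, act_ofAdd_one, swapAut, add_comm, eq_comm] using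
        congrArg (fun y : W n => toAdd y.left.1) hcomm
    have : Fact (2 < 2 ^ n) := ⟨by simpa using Nat.pow_lt_pow_right one_lt_two hn⟩
    exact ZMod.neg_one_ne_one hneg

lemma mem_diag_iff (x : W n) : x ∈ diag n ↔ x.right = 1 ∧ x.left.1 = x.left.2 := by
  rw [diag, a_mul_b, Subgroup.mem_zpowers_iff]
  constructor
  · rintro ⟨k, rfl⟩
    simp [← map_zpow]
  · rintro ⟨hr, hl⟩
    refine ⟨(toAdd x.left.1).cast, ?_⟩
    rw [← map_zpow]
    ext <;> simp [← ofAdd_zsmul, hr, hl]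

lemma centralizer_closure_eq_diag (hn : 2 ≤ n) :
    Subgroup.centralizer (Subgroup.closure {a n * (b n)⁻¹, t n} : Set (W n)) = diag n := by
  ext x
  simp only [Subgroup.centralizer_closure, Subgroup.mem_centralizer_iff, mem_diag_iff,
    Set.forall_mem_insert, Set.mem_singleton_iff, forall_eq]
  exact and_congr (commute_a_mul_b_inv_iff hn x) (commute_t_iff x)

lemma diag_eq_center (hn : 2 ≤ n) : diag n = Subgroup.center (W n) := by
  refine le_antisymm ?_ ((Subgroup.center_le_centralizer _).trans
    (centralizer_closure_eq_diag hn).le)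
  rw [diag, Subgroup.zpowers_le, Subgroup.mem_center_iff, a_mul_b]
  intro x
  ext <;> simp [act_apply_diag, mul_comm]

def ofDihedral : DihedralGroup (2 ^ n) →* W n where
  toFun
    | r i => inl (ofAdd i, ofAdd (-i))
    | sr i => ⟨(ofAdd (-i), ofAdd i), ofAdd 1⟩
  map_one' := by
    rw [one_def]
    simp [Prod.mk_one_one]
  map_mul' := by
    rintro (i | i) (j | j) <;> ext <;> simp [act_ofAdd_one, swapAut] <;> abel

lemma ofDihedral_injective : Function.Injective (ofDihedral (n := n)) := by
  rintro (i | i) (j | j) h <;>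
    simp_all [ofDihedral, SemidirectProduct.ext_iff, eq_comm (b := ofAdd (1 : ZMod 2))]

lemma ofDihedral_r_one : ofDihedral (r 1) = a n * (b n)⁻¹ := by
  rw [a_mul_b_inv]; rfl

lemma ofDihedral_sr_zero : ofDihedral (sr 0) = t n := by
  ext <;> simp [ofDihedral, t]

lemma range_ofDihedral :
    (ofDihedral (n := n)).range = Subgroup.closure {a n * (b n)⁻¹, t n} := by
  rw [MonoidHom.range_eq_map, ← closure_r_one_sr_zero, MonoidHom.map_closure, Set.image_pair,
    ofDihedral_r_one, ofDihedral_sr_zero]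

lemma a_mul_b_inv_pow (k : ℕ) : (a n * (b n)⁻¹) ^ k = ofDihedral (r k) := by
  rw [← ofDihedral_r_one, ← map_pow, r_one_pow]

lemma orderOf_a_mul_b_inv : orderOf (a n * (b n)⁻¹) = 2 ^ n := by
  rw [← ofDihedral_r_one, orderOf_injective _ ofDihedral_injective, orderOf_r_one]

lemma orderOf_a_mul_b_inv_pow (hn : n ≠ 0) : orderOf ((a n * (b n)⁻¹) ^ 2 ^ (n - 1)) = 2 := by
  have h : 2 ^ (n - 1) = orderOf (a n * (b n)⁻¹) / 2 := by
    rw [orderOf_a_mul_b_inv, ← pow_sub_one_mul hn, Nat.mul_div_cancel _ two_pos]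
  rw [h, orderOf_pow_orderOf_div] <;> rw [orderOf_a_mul_b_inv]
  · positivity
  · exact dvd_pow_self 2 hn

lemma ofDihedral_mem_diag_iff (hn : n ≠ 0) (d : DihedralGroup (2 ^ n)) :
    ofDihedral d ∈ diag n ↔ d = 1 ∨ d = r (2 ^ (n - 1) : ℕ) := by
  rw [mem_diag_iff, one_def]
  rcases d with i | i
  · simp only [ofDihedral, MonoidHom.coe_mk, OneHom.coe_mk, right_inl, left_inl, r.injEq,
      true_and, EmbeddingLike.apply_eq_iff_eq]
    rw [eq_comm, ZMod.neg_eq_self_iff_two_pow hn]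
  · simp [ofDihedral, -r_zero]

lemma closure_inf_diag_eq_zpowers (hn : n ≠ 0) :
    Subgroup.closure {a n * (b n)⁻¹, t n} ⊓ diag n =
      Subgroup.zpowers ((a n * (b n)⁻¹) ^ 2 ^ (n - 1)) := by
  refine le_antisymm ?_ ?_
  · rintro _ ⟨hD, hdiag⟩
    rw [← range_ofDihedral] at hD
    obtain ⟨d, rfl⟩ := hD
    rcases (ofDihedral_mem_diag_iff hn d).1 hdiag with rfl | rfl
    · rw [map_one]; exact one_mem _
    · rw [← a_mul_b_inv_pow]; exact Subgroup.mem_zpowers _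
  · rw [Subgroup.zpowers_le, a_mul_b_inv_pow, ← range_ofDihedral]
    exact ⟨⟨_, rfl⟩, (ofDihedral_mem_diag_iff hn _).2 (Or.inr rfl)⟩

end Wreathed

open Wreathed in
/-- Let `D = ⟨ab⁻¹, t⟩` in the wreathed 2-group. Then `D` is dihedral of order `2^{n+1}`,
`Z(D) = ⟨(ab⁻¹)^{2^{n-1}}⟩` has order 2, and `C_W(D) = Δ = Z(W)`. -/
theorem dihedral_subgroup_wreathed (n : ℕ) (hn : 2 ≤ n) :
    Nonempty (↥(Subgroup.closure {a n * (b n)⁻¹, t n} : Subgroup (W n)) ≃*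
        DihedralGroup (2 ^ n)) ∧
      (Subgroup.closure {a n * (b n)⁻¹, t n} : Subgroup (W n)) ⊓
          Subgroup.centralizer (Subgroup.closure {a n * (b n)⁻¹, t n} : Set (W n))
        = Subgroup.zpowers ((a n * (b n)⁻¹) ^ 2 ^ (n - 1)) ∧
      Nat.card ↥(Subgroup.zpowers ((a n * (b n)⁻¹) ^ 2 ^ (n - 1))) = 2 ∧
      Subgroup.centralizer (Subgroup.closure {a n * (b n)⁻¹, t n} : Set (W n)) = diag n ∧
      diag n = Subgroup.center (W n) := by
  have hn0 : n ≠ 0 := by omega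
  refine ⟨⟨(MulEquiv.subgroupCongr range_ofDihedral.symm).trans
      (MonoidHom.ofInjective ofDihedral_injective).symm⟩, ?_, ?_,
    centralizer_closure_eq_diag hn, diag_eq_center hn⟩
  · rw [centralizer_closure_eq_diag hn, closure_inf_diag_eq_zpowers hn0]
  · rw [Nat.card_zpowers, orderOf_a_mul_b_inv_pow hn0]
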